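/- arXiv:2410.06942 — 3 statements merged into one kernel-verified Lean document; each statement's English description precedes it below -/
import Mathlib

section
/- Let 2 ≤ k ≤ n and let λ₁, λ₂ ∈ ℝ with λ₂ > 0 and σ_k(λ₁, λ₂, …, λ₂) := λ₂^{k−1}[C(n−1,k−1)λ₁ + C(n−1,k)λ₂] > 0. Then σ_l(λ₁, λ₂, …, λ₂) > 0 for every 1 ≤ l ≤ k. -/
lemma choose_ratio_antitone (m a b : ℕ) (hab : a ≤ b) :
    m.choose a * m.choose (b + 1) ≤ m.choose (a + 1) * m.choose b := by
  have hpos : 0 < (a + 1) * (b + 1) := by positivity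
  apply Nat.le_of_mul_le_mul_right _ hpos
  have h1 : m.choose (b + 1) * (b + 1) = m.choose b * (m - b) :=
    Nat.choose_succ_right_eq m b
  have h2 : m.choose (a + 1) * (a + 1) = m.choose a * (m - a) :=
    Nat.choose_succ_right_eq m a
  have key : (a + 1) * (m - b) ≤ (b + 1) * (m - a) :=
    Nat.mul_le_mul (by omega) (by omega)
  calc m.choose a * m.choose (b + 1) * ((a + 1) * (b + 1))
      = m.choose a * (m.choose (b + 1) * (b + 1)) * (a + 1) := by ring
    _ = m.choose a * (m.choose b * (m - b)) * (a + 1) := by rw [h1]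
    _ = m.choose a * m.choose b * ((a + 1) * (m - b)) := by ring
    _ ≤ m.choose a * m.choose b * ((b + 1) * (m - a)) :=
        Nat.mul_le_mul_left _ key
    _ = m.choose a * (m - a) * (b + 1) * m.choose b := by ring
    _ = m.choose (a + 1) * (a + 1) * (b + 1) * m.choose b := by rw [h2]
    _ = m.choose (a + 1) * m.choose b * ((a + 1) * (b + 1)) := by ring

/-- If λ₂ > 0 and σ_k(λ₁,λ₂,…,λ₂) > 0 (with σ_l given by the closed formula for a vector
with one entry λ₁ and n−1 entries λ₂), then σ_l > 0 for every 1 ≤ l ≤ k. -/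
theorem lower_sigmas_positive (n k : ℕ) (hk : 2 ≤ k) (hkn : k ≤ n)
    (lam1 lam2 : ℝ) (hlam2 : 0 < lam2)
    (sigma : ℕ → ℝ)
    (hsigma : ∀ l, sigma l =
      lam2 ^ (l - 1) * ((n - 1).choose (l - 1) * lam1 + (n - 1).choose l * lam2))
    (hk_pos : 0 < sigma k) :
    ∀ l, 1 ≤ l → l ≤ k → 0 < sigma l := by
  intro l hl1 hlk
  set m := n - 1 with hm
  -- bracket for k is positive
  have hbk : 0 < (m.choose (k - 1) : ℝ) * lam1 + m.choose k * lam2 := by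
    rw [hsigma k] at hk_pos
    have hp : (0 : ℝ) < lam2 ^ (k - 1) := pow_pos hlam2 _
    nlinarith
  -- choose positivity
  have hck : 0 < m.choose (k - 1) := Nat.choose_pos (by omega)
  have hcl : 0 < m.choose (l - 1) := Nat.choose_pos (by omega)
  -- key inequality
  have hineq : m.choose (l - 1) * m.choose k ≤ m.choose l * m.choose (k - 1) := by
    have := choose_ratio_antitone m (l - 1) (k - 1) (by omega)
    have e1 : l - 1 + 1 = l := by omega
    have e2 : k - 1 + 1 = k := by omega
    rw [e1, e2] at this
    linarith [this]
  have hineqR : ((m.choose (l - 1) : ℝ)) * m.choose k ≤ (m.choose l : ℝ) * m.choose (k - 1) := by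
    exact_mod_cast hineq
  have hckR : (0 : ℝ) < m.choose (k - 1) := by exact_mod_cast hck
  have hclR : (0 : ℝ) < m.choose (l - 1) := by exact_mod_cast hcl
  rw [hsigma l]
  apply mul_pos (pow_pos hlam2 _)
  nlinarith [mul_pos hclR hbk]
end

section
/- Suppose n > 2k ≥ 2, ρ ≤ 2θ, θ > 0, 2θ + ρ > 0, set γ = ((n+2k)/k)·((2θ+ρ)/(4θ)), and let (X, Z) : [s₀, ∞) → ℝ² be a C¹ solution of X' = −(n−2k)(1 − (k/(n+2k))X^{1/k})X + Z·f(X^{1/k}), Z' = 2kZ(1 − (2k/(n+2k))X^{1/k}), where f(y) = c(1 − (k/(n+2k))y)·((γ−y)/(1 − (k/(n+2k))y))^k with c > 0. If X(s₀) < γ^k and Z(s₀) > 0, then X(s) ≤ γ^k and Z(s) > 0 for all s ≥ s₀. -/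
open Set

/-- A Grönwall-type lemma: if `u' ≥ -C·u` on `[a,b]` and `u a > 0` then `u b > 0`. -/
lemma gronwall_pos_aux (u d : ℝ → ℝ) (C a b : ℝ) (hab : a ≤ b)
    (hu : ∀ s ∈ Icc a b, HasDerivAt u (d s) s)
    (hbd : ∀ s ∈ Ioo a b, -C * u s ≤ d s)
    (h0 : 0 < u a) : 0 < u b := by
  set v : ℝ → ℝ := fun s => u s * Real.exp (C * s) with hv_def
  have hv : ∀ s ∈ Icc a b, HasDerivAt v ((d s + C * u s) * Real.exp (C * s)) s := by
    intro s hs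
    have h1 : HasDerivAt (fun x : ℝ => Real.exp (C * x)) (Real.exp (C * s) * (C * 1)) s :=
      ((hasDerivAt_id s).const_mul C).exp
    have h2 : HasDerivAt (fun x => u x * Real.exp (C * x))
        (d s * Real.exp (C * s) + u s * (Real.exp (C * s) * (C * 1))) s := (hu s hs).mul h1
    convert h2 using 1
    ring
  have hmono : MonotoneOn v (Icc a b) := by
    apply monotoneOn_of_deriv_nonneg (convex_Icc a b)
    · exact fun s hs => (hv s hs).continuousAt.continuousWithinAt
    · intro s hs
      rw [interior_Icc] at hs
      exact ((hv s (Ioo_subset_Icc_self hs)).differentiableAt).differentiableWithinAt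
    · intro s hs
      rw [interior_Icc] at hs
      rw [(hv s (Ioo_subset_Icc_self hs)).deriv]
      have h2 := hbd s hs
      have h3 : 0 ≤ d s + C * u s := by linarith
      exact mul_nonneg h3 (Real.exp_pos _).le
  have hvab : v a ≤ v b := hmono (left_mem_Icc.2 hab) (right_mem_Icc.2 hab) hab
  have hva : 0 < v a := mul_pos h0 (Real.exp_pos _)
  have hvb : 0 < u b * Real.exp (C * b) := lt_of_lt_of_le hva hvab
  nlinarith [Real.exp_pos (C * b), hvb]

/-- Pointwise estimates on the nonlinearity `f` in the admissible region. -/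
lemma f_estimate_aux (k : ℕ) (hk : 1 ≤ k) (A γ c : ℝ) (hA : 0 < A) (hγ : 0 < γ)
    (hAγ : A * γ ≤ 1) (hc : 0 < c) (x : ℝ) (hx0 : 0 ≤ x) (hx1 : x ≤ γ ^ k) :
    0 ≤ x ^ ((1:ℝ)/k) ∧ x ^ ((1:ℝ)/k) ≤ γ ∧
    0 ≤ c * (1 - A * x ^ ((1:ℝ)/k)) *
        ((γ - x ^ ((1:ℝ)/k)) / (1 - A * x ^ ((1:ℝ)/k))) ^ k ∧
    c * (1 - A * x ^ ((1:ℝ)/k)) *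
        ((γ - x ^ ((1:ℝ)/k)) / (1 - A * x ^ ((1:ℝ)/k))) ^ k ≤
      c * (1/A) ^ (k-1) * (1/γ) ^ (k-1) * (γ ^ k - x) := by
  have hk0 : k ≠ 0 := by omega
  set y := x ^ ((1:ℝ)/k) with hy_def
  have hy0 : 0 ≤ y := Real.rpow_nonneg hx0 _
  have hyk : y ^ k = x := by
    rw [hy_def, one_div, Real.rpow_inv_natCast_pow hx0 hk0]
  have hyγ : y ≤ γ := by
    have h1 : y ≤ (γ ^ k) ^ ((1:ℝ)/k) := by
      rw [hy_def]
      exact Real.rpow_le_rpow hx0 hx1 (by positivity)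
    rwa [one_div, Real.pow_rpow_inv_natCast hγ.le hk0] at h1
  have hAy : A * y ≤ 1 := le_trans (by nlinarith) hAγ
  have hbase0 : 0 ≤ (γ - y) / (1 - A * y) :=
    div_nonneg (by linarith) (by linarith)
  refine ⟨hy0, hyγ, ?_, ?_⟩
  · exact mul_nonneg (mul_nonneg hc.le (by linarith)) (pow_nonneg hbase0 k)
  · rcases eq_or_lt_of_le hyγ with heq | hlt
    · have h1 : γ - y = 0 := by rw [heq]; ring
      have h2 : γ ^ k - x = 0 := by rw [← hyk, heq]; ring
      rw [h1, h2, zero_div, zero_pow hk0]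
      simp
    · have hpos : 0 < A * (γ - y) := mul_pos hA (by linarith)
      have hden : A * (γ - y) ≤ 1 - A * y := by nlinarith
      have hden0 : 0 < 1 - A * y := lt_of_lt_of_le hpos hden
      have hb1 : (γ - y) / (1 - A * y) ≤ 1 / A := by
        have h1 : (γ - y) / (1 - A * y) ≤ (γ - y) / (A * (γ - y)) :=
          div_le_div_of_nonneg_left (by linarith) hpos hden
        have h2 : (γ - y) / (A * (γ - y)) = 1 / A := by
          rw [mul_comm, div_mul_eq_div_div, div_self (by linarith : γ - y ≠ 0)]
        linarith
      have h5 : γ ^ (k-1) * (γ - y) ≤ γ ^ k - y ^ k := by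
        have hkk : k = (k - 1) + 1 := (Nat.succ_pred_eq_of_pos hk).symm
        have hp : y ^ (k-1) ≤ γ ^ (k-1) := pow_le_pow_left₀ hy0 hyγ _
        have hgk : γ ^ k = γ ^ (k-1) * γ := by
          conv_lhs => rw [hkk]
          rw [pow_succ]
        have hyk2 : y ^ k = y ^ (k-1) * y := by
          conv_lhs => rw [hkk]
          rw [pow_succ]
        rw [hgk, hyk2]
        nlinarith [mul_nonneg hy0 (sub_nonneg.2 hp)]
      have h7 : γ - y ≤ (1/γ) ^ (k-1) * (γ ^ k - x) := by
        rw [← hyk, div_pow, one_pow]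
        rw [div_mul_eq_mul_div, le_div_iff₀ (by positivity : (0:ℝ) < γ ^ (k-1))]
        nlinarith [h5]
      calc c * (1 - A * y) * ((γ - y) / (1 - A * y)) ^ k
          = c * (1 - A * y) * (((γ - y) / (1 - A * y)) ^ (k-1) * ((γ - y) / (1 - A * y))) := by
            rw [← pow_succ, Nat.sub_add_cancel hk]
        _ ≤ c * (1 - A * y) * ((1/A) ^ (k-1) * ((γ - y) / (1 - A * y))) := by
            gcongr
        _ = c * (1/A) ^ (k-1) * (γ - y) := by
            field_simp
        _ ≤ c * (1/A) ^ (k-1) * ((1/γ) ^ (k-1) * (γ ^ k - x)) := by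
            have hcA : 0 ≤ c * (1/A) ^ (k-1) := by positivity
            exact mul_le_mul_of_nonneg_left h7 hcA
        _ = c * (1/A) ^ (k-1) * (1/γ) ^ (k-1) * (γ ^ k - x) := by ring

set_option maxHeartbeats 1000000 in
/-- Invariance of the admissible region: if X(s₀) < γ^k and Z(s₀) > 0, then along the
soliton ODE system X(s) ≤ γ^k and Z(s) > 0 for all s ≥ s₀. -/
theorem admissible_region_invariant (n k : ℕ) (hk : 1 ≤ k) (hnk : 2 * k < n)
    (θ ρ : ℝ) (hθ : 0 < θ) (hρ : ρ ≤ 2 * θ) (h2 : 0 < 2 * θ + ρ)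
    (γ : ℝ) (hγ : γ = (((n : ℝ) + 2 * k) / k) * ((2 * θ + ρ) / (4 * θ)))
    (c : ℝ) (hc : 0 < c) (f : ℝ → ℝ)
    (hf : ∀ y, f y = c * (1 - ((k : ℝ) / (n + 2 * k)) * y) *
      ((γ - y) / (1 - ((k : ℝ) / (n + 2 * k)) * y)) ^ k)
    (s₀ : ℝ) (X Z : ℝ → ℝ)
    (hX : ∀ s, s₀ ≤ s → HasDerivAt X
      (-((n : ℝ) - 2 * k) * (1 - ((k : ℝ) / (n + 2 * k)) * (X s) ^ ((1 : ℝ) / k)) * X s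
        + Z s * f ((X s) ^ ((1 : ℝ) / k))) s)
    (hZ : ∀ s, s₀ ≤ s → HasDerivAt Z
      (2 * k * Z s * (1 - (2 * (k : ℝ) / (n + 2 * k)) * (X s) ^ ((1 : ℝ) / k))) s)
    (hX0 : X s₀ < γ ^ k) (hZ0 : 0 < Z s₀) :
    ∀ s, s₀ ≤ s → X s ≤ γ ^ k ∧ 0 < Z s := by
  have hk0 : k ≠ 0 := by omega
  have hkR : (0:ℝ) < k := by exact_mod_cast Nat.pos_of_ne_zero hk0
  have hnR : (0:ℝ) ≤ n := Nat.cast_nonneg n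
  have hn2k : (0:ℝ) < (n:ℝ) + 2 * k := by linarith
  set A : ℝ := (k : ℝ) / ((n:ℝ) + 2 * (k:ℝ)) with hAdef
  have hA : 0 < A := div_pos hkR hn2k
  have hN : (0:ℝ) < (n:ℝ) - 2 * k := by
    have : ((2*k : ℕ) : ℝ) < n := by exact_mod_cast hnk
    push_cast at this
    linarith
  have hγpos : 0 < γ := by
    rw [hγ]
    exact mul_pos (div_pos hn2k hkR) (div_pos h2 (by linarith))
  have hAγ : A * γ ≤ 1 := by
    have hAγeq : A * γ = (2*θ + ρ) / (4*θ) := by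
      rw [hγ, hAdef]
      field_simp
    rw [hAγeq, div_le_one (by linarith)]
    linarith
  -- continuity facts
  have hXct : ∀ s, s₀ ≤ s → ContinuousAt X s := fun s hs => (hX s hs).continuousAt
  have hZct : ∀ s, s₀ ≤ s → ContinuousAt Z s := fun s hs => (hZ s hs).continuousAt
  have hmaxc : Continuous (fun s : ℝ => max s s₀) := continuous_id.max continuous_const
  have hXc : Continuous (fun s => X (max s s₀)) := by
    rw [continuous_iff_continuousAt]
    intro s
    exact ContinuousAt.comp (hXct _ (le_max_right s s₀)) hmaxc.continuousAt
  have hZc : Continuous (fun s => Z (max s s₀)) := by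
    rw [continuous_iff_continuousAt]
    intro s
    exact ContinuousAt.comp (hZct _ (le_max_right s s₀)) hmaxc.continuousAt
  -- Step 1: Z stays positive
  have hZpos : ∀ s, s₀ ≤ s → 0 < Z s := by
    by_contra hcon
    push_neg at hcon
    obtain ⟨s₁, hs₁, hZs₁⟩ := hcon
    set S := Icc s₀ s₁ ∩ (fun s => Z (max s s₀)) ⁻¹' Iic 0 with hSdef
    have hScl : IsClosed S := isClosed_Icc.inter (isClosed_Iic.preimage hZc)
    have hs₁S : s₁ ∈ S := ⟨⟨hs₁, le_refl _⟩, by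
      simp only [mem_preimage, mem_Iic, max_eq_left hs₁]; exact hZs₁⟩
    have hbdd : BddBelow S := ⟨s₀, fun x hx => hx.1.1⟩
    set t := sInf S with htdef
    have htS : t ∈ S := hScl.csInf_mem ⟨s₁, hs₁S⟩ hbdd
    have ht0 : s₀ ≤ t := htS.1.1
    have htZ : Z t ≤ 0 := by
      have := htS.2
      simpa [max_eq_left ht0] using this
    have hlt : ∀ s, s₀ ≤ s → s < t → 0 < Z s := by
      intro s hs hst
      by_contra hZs
      push_neg at hZs
      have hmem : s ∈ S := ⟨⟨hs, le_trans hst.le htS.1.2⟩, by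
        simp only [mem_preimage, mem_Iic, max_eq_left hs]; exact hZs⟩
      exact absurd (csInf_le hbdd hmem) (not_le.2 hst)
    have hst0 : s₀ < t := by
      rcases eq_or_lt_of_le ht0 with h | h
      · exfalso; rw [← h] at htZ; linarith
      · exact h
    -- bound the coefficient on Icc s₀ t
    have hgcont : Continuous (fun s => |2*(k:ℝ)*(1 - 2*A*(X (max s s₀)) ^ ((1:ℝ)/k))|) := by
      apply Continuous.abs
      exact continuous_const.mul (continuous_const.sub (continuous_const.mul
        (hXc.rpow_const (fun s => Or.inr (by positivity)))))
    obtain ⟨m, hmIcc, hm⟩ := isCompact_Icc.exists_isMaxOn (nonempty_Icc.2 ht0)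
      hgcont.continuousOn
    set C := |2*(k:ℝ)*(1 - 2*A*(X (max m s₀)) ^ ((1:ℝ)/k))| with hCdef
    have hgron : 0 < Z t := by
      apply gronwall_pos_aux Z
        (fun s => 2 * k * Z s * (1 - (2 * (k : ℝ) / (n + 2 * k)) * (X s) ^ ((1 : ℝ) / k)))
        C s₀ t ht0 (fun s hs => hZ s hs.1) ?_ hZ0
      intro s hs
      have hZspos := hlt s hs.1.le hs.2
      have hCs := isMaxOn_iff.mp hm s (Ioo_subset_Icc_self hs)
      simp only [max_eq_left hs.1.le] at hCs
      have h1 : -C ≤ 2*(k:ℝ)*(1 - 2*A*(X s) ^ ((1:ℝ)/k)) := (abs_le.1 hCs).1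
      show -C * Z s ≤ 2 * (k:ℝ) * Z s * (1 - 2 * (k:ℝ) / ((n:ℝ) + 2 * (k:ℝ)) * X s ^ ((1:ℝ)/(k:ℝ)))
      have h2 : (2 * (k : ℝ) / ((n:ℝ) + 2 * k)) = 2*A := by
        rw [hAdef]; ring
      rw [h2]
      nlinarith [mul_le_mul_of_nonneg_left h1 hZspos.le]
    linarith
  -- Step 2: X stays ≤ γ^k
  have hXle : ∀ s, s₀ ≤ s → X s ≤ γ ^ k := by
    intro s₁ hs₁
    by_contra hcon
    push_neg at hcon
    set S := Icc s₀ s₁ ∩ (fun s => X (max s s₀)) ⁻¹' Ici (γ ^ k) with hSdef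
    have hScl : IsClosed S := isClosed_Icc.inter (isClosed_Ici.preimage hXc)
    have hs₁S : s₁ ∈ S := ⟨⟨hs₁, le_refl _⟩, by
      simp only [mem_preimage, mem_Ici, max_eq_left hs₁]; exact hcon.le⟩
    have hbdd : BddBelow S := ⟨s₀, fun x hx => hx.1.1⟩
    set t := sInf S with htdef
    have htS : t ∈ S := hScl.csInf_mem ⟨s₁, hs₁S⟩ hbdd
    have ht0 : s₀ ≤ t := htS.1.1
    have htX : γ ^ k ≤ X t := by
      have := htS.2
      simpa [max_eq_left ht0] using this
    have hlt : ∀ s, s₀ ≤ s → s < t → X s < γ ^ k := by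
      intro s hs hst
      by_contra hXs
      push_neg at hXs
      have hmem : s ∈ S := ⟨⟨hs, le_trans hst.le htS.1.2⟩, by
        simp only [mem_preimage, mem_Ici, max_eq_left hs]; exact hXs⟩
      exact absurd (csInf_le hbdd hmem) (not_le.2 hst)
    have hst0 : s₀ < t := by
      rcases eq_or_lt_of_le ht0 with h | h
      · exfalso; rw [← h] at htX; linarith
      · exact h
    -- X t = γ ^ k via left continuity
    have htXle : X t ≤ γ ^ k := by
      have hct : ContinuousAt X t := hXct t ht0
      have hten : Filter.Tendsto X (nhdsWithin t (Iio t)) (nhds (X t)) :=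
        hct.tendsto.mono_left nhdsWithin_le_nhds
      apply le_of_tendsto hten
      have hmem : Ioo s₀ t ∈ nhdsWithin t (Iio t) :=
        Ioo_mem_nhdsLT_of_mem ⟨hst0, le_refl t⟩
      filter_upwards [hmem] with s hs
      exact (hlt s hs.1.le hs.2).le
    have htXeq : X t = γ ^ k := le_antisymm htXle htX
    have hXtpos : 0 < X t := by rw [htXeq]; positivity
    have hnb : X ⁻¹' Ioi 0 ∈ nhds t := (hXct t ht0) (Ioi_mem_nhds hXtpos)
    obtain ⟨δ, hδ0, hδ⟩ := Metric.mem_nhds_iff.1 hnb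
    set τ := max (t - δ/2) ((s₀ + t)/2) with hτdef
    have hτ0 : s₀ < τ := lt_of_lt_of_le (by linarith) (le_max_right _ _)
    have hτt : τ < t := max_lt (by linarith) (by linarith)
    have hXpos : ∀ s ∈ Icc τ t, 0 < X s := by
      intro s hs
      apply hδ
      rw [Metric.mem_ball, Real.dist_eq, abs_lt]
      constructor
      · have h1 := hs.1
        have h2 := le_max_left (t - δ/2) ((s₀ + t)/2)
        linarith
      · linarith [hs.2, hδ0]
    have hXub : ∀ s ∈ Icc τ t, X s ≤ γ ^ k := by
      intro s hs
      rcases lt_or_eq_of_le hs.2 with h | h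
      · exact (hlt s (le_trans hτ0.le hs.1) h).le
      · rw [h, htXeq]
    -- bound Z on Icc τ t
    have hZcont : ContinuousOn Z (Icc τ t) :=
      fun s hs => (hZct s (le_trans hτ0.le hs.1)).continuousWithinAt
    obtain ⟨m, hmIcc, hm⟩ := isCompact_Icc.exists_isMaxOn (nonempty_Icc.2 hτt.le) hZcont
    set M := Z m with hMdef
    have hM0 : 0 < M := hZpos m (le_trans hτ0.le hmIcc.1)
    set C₀ : ℝ := c * (1/A) ^ (k-1) * (1/γ) ^ (k-1) with hC₀def
    have hC₀ : 0 ≤ C₀ := by positivity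
    have key : 0 < γ ^ k - X t := by
      apply gronwall_pos_aux (fun s => γ ^ k - X s)
        (fun s => -(-((n : ℝ) - 2 * k) * (1 - A * (X s) ^ ((1 : ℝ) / k)) * X s
          + Z s * f ((X s) ^ ((1 : ℝ) / k))))
        (M * C₀) τ t hτt.le ?_ ?_ ?_
      · intro s hs
        exact (hX s (le_trans hτ0.le hs.1)).const_sub (γ ^ k)
      · intro s hs
        have hsIcc := Ioo_subset_Icc_self hs
        obtain ⟨hy0, hyγ, hf0, hfle⟩ := f_estimate_aux k hk A γ c hA hγpos hAγ hc (X s)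
          (hXpos s hsIcc).le (hXub s hsIcc)
        show -(M * C₀) * (γ ^ k - X s) ≤
          -(-((n:ℝ) - 2 * (k:ℝ)) * (1 - A * X s ^ ((1:ℝ)/(k:ℝ))) * X s
            + Z s * f (X s ^ ((1:ℝ)/(k:ℝ))))
        rw [hf ((X s) ^ ((1:ℝ)/k))]
        have hAy1 : A * ((X s) ^ ((1:ℝ)/k)) ≤ 1 :=
          le_trans (mul_le_mul_of_nonneg_left hyγ hA.le) hAγ
        have hterm1 : -((n:ℝ) - 2*k) * (1 - A * (X s) ^ ((1:ℝ)/k)) * X s ≤ 0 := by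
          have hXs := hXpos s hsIcc
          have hprod : 0 ≤ ((n:ℝ) - 2*k) * (1 - A * (X s) ^ ((1:ℝ)/k)) * X s :=
            mul_nonneg (mul_nonneg hN.le (by linarith : (0:ℝ) ≤ 1 - A * (X s) ^ ((1:ℝ)/k))) hXs.le
          linarith [hprod]
        have hZsM : Z s ≤ M := isMaxOn_iff.mp hm s hsIcc
        have hterm2 : Z s * (c * (1 - A * (X s) ^ ((1:ℝ)/k)) *
            ((γ - (X s) ^ ((1:ℝ)/k)) / (1 - A * (X s) ^ ((1:ℝ)/k))) ^ k) ≤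
            M * C₀ * (γ ^ k - X s) := by
          calc Z s * (c * (1 - A * (X s) ^ ((1:ℝ)/k)) *
              ((γ - (X s) ^ ((1:ℝ)/k)) / (1 - A * (X s) ^ ((1:ℝ)/k))) ^ k)
              ≤ M * (c * (1 - A * (X s) ^ ((1:ℝ)/k)) *
              ((γ - (X s) ^ ((1:ℝ)/k)) / (1 - A * (X s) ^ ((1:ℝ)/k))) ^ k) :=
                mul_le_mul_of_nonneg_right hZsM hf0
            _ ≤ M * (C₀ * (γ ^ k - X s)) := by
                apply mul_le_mul_of_nonneg_left _ hM0.le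
                rw [hC₀def]
                exact hfle
            _ = M * C₀ * (γ ^ k - X s) := by ring
        linarith
      · have := hlt τ hτ0.le hτt
        show 0 < γ ^ k - X τ
        linarith
    rw [htXeq] at key
    linarith
  exact fun s hs => ⟨hXle s hs, hZpos s hs⟩
end

section
/- Let γ > 0, k ≥ 1 integer, and let X : ℝ → [0, γ^k) and Z : ℝ → (0, ∞) be continuous with lim_{s→∞} X(s) = X_∞ < γ^k and lim_{s→∞} Z(s) = ∞. Suppose X is differentiable and X'(s) = −a(X(s)) + Z(s)·f(X(s)^{1/k}) where a is continuous and f is continuous with f(y) ≥ δ₀ > 0 for y in a neighborhood of X_∞^{1/k}. Then X'(s) → ∞ as s → ∞, contradicting boundedness of X; i.e., no such pair (X, Z) exists. Consequently, if Z → ∞ and X converges with X ≤ γ^k, then lim_{s→∞} X(s) = γ^k. -/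
open Filter

/-- No orbit can converge to a limit X_∞ strictly below γ^k while Z → ∞: the forcing term
Z·f(X^{1/k}) would make X' unbounded, contradicting X < γ^k. -/
theorem no_limit_below_gamma (γ : ℝ) (hγ : 0 < γ) (k : ℕ) (hk : 1 ≤ k)
    (X Z : ℝ → ℝ)
    (hXrange : ∀ s, 0 ≤ X s ∧ X s < γ ^ k)
    (hZpos : ∀ s, 0 < Z s)
    (Xinf : ℝ) (hXinf : Tendsto X atTop (nhds Xinf)) (hXinflt : Xinf < γ ^ k)
    (hZinf : Tendsto Z atTop atTop)
    (a f : ℝ → ℝ) (ha : Continuous a) (hf : Continuous f)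
    (hX : ∀ s, HasDerivAt X (-a (X s) + Z s * f ((X s) ^ ((1 : ℝ) / k))) s)
    (δ₀ : ℝ) (hδ₀ : 0 < δ₀)
    (hfpos : ∀ᶠ y in nhds (Xinf ^ ((1 : ℝ) / k)), δ₀ ≤ f y) :
    False := by
  set C : ℝ := |a Xinf| + 1 with hC
  have hkpos : (0:ℝ) < (1:ℝ) / k := by
    have hk' : (0:ℝ) < (k:ℝ) := by exact_mod_cast Nat.lt_of_lt_of_le Nat.zero_lt_one hk
    positivity
  -- a ∘ X tends to a Xinf
  have haX : Tendsto (fun s => a (X s)) atTop (nhds (a Xinf)) :=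
    Tendsto.comp (ha.tendsto Xinf) hXinf
  have haC : ∀ᶠ s in atTop, a (X s) < C := by
    apply haX.eventually_lt_const
    simp [hC]
    linarith [le_abs_self (a Xinf)]
  -- X^(1/k) tends to Xinf^(1/k)
  have hrpow : Tendsto (fun s => (X s) ^ ((1:ℝ)/k)) atTop (nhds (Xinf ^ ((1:ℝ)/k))) := by
    exact Tendsto.comp (Real.continuousAt_rpow_const Xinf ((1:ℝ)/k) (Or.inr hkpos.le)) hXinf
  have hfX : ∀ᶠ s in atTop, δ₀ ≤ f ((X s) ^ ((1:ℝ)/k)) := hrpow.eventually hfpos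
  have hZbig : ∀ᶠ s in atTop, (C + 1) / δ₀ ≤ Z s := hZinf.eventually_ge_atTop _
  have hbig : ∀ᶠ s in atTop, (1:ℝ) ≤ -a (X s) + Z s * f ((X s) ^ ((1:ℝ)/k)) := by
    filter_upwards [haC, hfX, hZbig] with s h1 h2 h3
    have hZs := hZpos s
    have h4 : C + 1 ≤ Z s * f ((X s) ^ ((1:ℝ)/k)) := by
      calc C + 1 = (C + 1) / δ₀ * δ₀ := by field_simp
        _ ≤ Z s * δ₀ := by nlinarith
        _ ≤ Z s * f _ := by nlinarith
    linarith
  obtain ⟨s₀, hs₀⟩ := hbig.exists_forall_of_atTop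
  -- g t = X t - t is monotone on [s₀, ∞)
  set g : ℝ → ℝ := fun t => X t - t with hg
  have hdiff : Differentiable ℝ g := fun t => ((hX t).sub (hasDerivAt_id t)).differentiableAt
  have hmono : MonotoneOn g (Set.Ici s₀) := by
    apply monotoneOn_of_deriv_nonneg (convex_Ici s₀) hdiff.continuous.continuousOn
      hdiff.differentiableOn
    intro t ht
    have hd : HasDerivAt g (-a (X t) + Z t * f ((X t) ^ ((1:ℝ)/k)) - 1) t :=
      (hX t).sub (hasDerivAt_id t)
    rw [hd.deriv]
    rw [interior_Ici] at ht
    linarith [hs₀ t (le_of_lt ht)]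
  set s₁ : ℝ := s₀ + γ ^ k + 1 with hs₁
  have h1 : g s₀ ≤ g s₁ := hmono (Set.self_mem_Ici) (by simp only [hs₁, Set.mem_Ici]; nlinarith [pow_pos hγ k]) (by simp only [hs₁, Set.mem_Ici]; nlinarith [pow_pos hγ k])
  have h2 := (hXrange s₁).2
  have h3 := (hXrange s₀).1
  simp only [hg] at h1
  nlinarith
end
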